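/- arXiv:1608.01919 — 2 statements merged into one kernel-verified Lean document; each statement's English description precedes it below -/
import Mathlib

section
/- Let M be a finitely generated module over a discrete valuation ring R with residue field k and uniformizer π, and let a be a natural number. Then the length of the π^a-torsion submodule of M is at most a times the dimension of M ⊗_R k as a k-vector space. -/
/-!
Over a local ring whose maximal ideal `𝔪 = (π)` is principal, `𝔪 M = π M` needs no more generators
than `M`, and `M / 𝔪 M` is a vector space over the residue field whose dimension is the minimal
number `μ(M)` of generators of `M`. Additivity of length along `0 → π M → M → M / π M → 0` and
induction on `a` therefore give `length M ≤ a · μ(M)` when `π ^ a` kills `M`. Over a DVR, a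
principal ideal domain, the submodule `M[π ^ a]` needs at most `μ(M)` generators, and
`μ(M) = dim_k (k ⊗ M)` by Nakayama.
-/

open TensorProduct

/-- The length of an `R`-module `M`, defined as the Krull dimension of its lattice of
submodules (an element of `WithBot ℕ∞`). -/
noncomputable def moduleLength (R M : Type*) [Ring R] [AddCommGroup M] [Module R M] :
    WithBot ℕ∞ :=
  Order.krullDim (Submodule R M)

open Module Submodule IsLocalRing Pointwise

theorem Submodule.spanFinrank_le_spanFinrank_top {R M : Type*} [CommRing R] [IsDomain R]
    [IsPrincipalIdealRing R] [AddCommGroup M] [Module R M] [Module.Finite R M]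
    (N : Submodule R M) : N.spanFinrank ≤ (⊤ : Submodule R M).spanFinrank := by
  obtain ⟨s, hcard, hs⟩ :=
    (Module.Finite.fg_top (R := R) (M := M)).exists_span_finset_card_eq_spanFinrank
  let φ : (s →₀ R) →ₗ[R] M := Finsupp.linearCombination R (↑)
  have hφ : Function.Surjective φ := by
    rw [← LinearMap.range_eq_top, Finsupp.range_linearCombination]
    simpa using hs
  let N' := N.comap φ
  have : Module.Free R N' := .of_basis (basisOfPid Finsupp.basisSingleOne N').2
  calc N.spanFinrank = (N'.map φ).spanFinrank := by rw [map_comap_eq_of_surjective hφ]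
    _ ≤ N'.spanFinrank := spanFinrank_map_le_of_fg φ (IsNoetherian.noetherian N')
    _ = finrank R N' := by rw [← spanFinrank_top, ← finrank_eq_spanFinrank_of_free]
    _ ≤ finrank R (s →₀ R) := finrank_le N'
    _ = (⊤ : Submodule R M).spanFinrank := by simp [hcard]

theorem IsLocalRing.finrank_residueField_tensor_eq_spanFinrank {R M : Type*} [CommRing R]
    [IsLocalRing R] [AddCommGroup M] [Module R M] [Module.Finite R M] :
    finrank (ResidueField R) (ResidueField R ⊗[R] M) = (⊤ : Submodule R M).spanFinrank := by
  let k := ResidueField R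
  calc finrank k (k ⊗[R] M)
      = (⊤ : Submodule k (k ⊗[R] (⊤ : Submodule R M))).spanFinrank := by
        rw [finrank_eq_spanFinrank_of_free]
        exact congrArg Cardinal.toNat
          (spanRank_eq_of_equiv (LinearEquiv.baseChange R _ _ _ topEquiv.symm))
    _ = (⊤ : Submodule R M).spanFinrank :=
        TensorProduct.spanFinrank_top_eq_of_residueField _ Module.Finite.fg_top

theorem IsLocalRing.length_quotient_maximalIdeal_smul_top {R M : Type*} [CommRing R]
    [IsLocalRing R] [AddCommGroup M] [Module R M] [Module.Finite R M] :
    length R (M ⧸ maximalIdeal R • (⊤ : Submodule R M)) = (⊤ : Submodule R M).spanFinrank := by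
  rw [← (quotTensorEquivQuotSMul M (maximalIdeal R)).length_eq]
  change length R (ResidueField R ⊗[R] M) = _
  rw [length_eq_of_surjective (R := ResidueField R) residue_surjective, length_eq_finrank,
    finrank_residueField_tensor_eq_spanFinrank]

theorem IsLocalRing.length_le_mul_spanFinrank_of_isTorsionBy {R : Type*} [CommRing R]
    [IsLocalRing R] {π : R} (hπ : maximalIdeal R = Ideal.span {π}) (a : ℕ)
    (M : Type*) [AddCommGroup M] [Module R M] [Module.Finite R M] (hM : IsTorsionBy R M (π ^ a)) :
    length R M ≤ a * (⊤ : Submodule R M).spanFinrank := by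
  induction a generalizing M with
  | zero =>
    have : Subsingleton M := ⟨fun x y => by simpa using (@hM x).trans (@hM y).symm⟩
    simp [length_eq_zero]
  | succ a ih =>
    have hW : maximalIdeal R • (⊤ : Submodule R M) = π • ⊤ := by
      rw [hπ, ideal_span_singleton_smul]
    set W := maximalIdeal R • (⊤ : Submodule R M)
    have hWgen : W.spanFinrank ≤ (⊤ : Submodule R M).spanFinrank := by
      rw [hW, pointwise_smul_def]
      exact spanFinrank_map_le_of_fg _ Module.Finite.fg_top
    have : Module.Finite R W := by
      rw [Module.Finite.iff_fg, hW, pointwise_smul_def]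
      exact Module.Finite.fg_top.map _
    have hWtors : IsTorsionBy R W (π ^ a) := by
      rintro ⟨x, hx⟩
      rw [hW, mem_smul_pointwise_iff_exists] at hx
      obtain ⟨y, -, rfl⟩ := hx
      ext
      simpa [smul_smul, ← pow_succ] using @hM y
    calc length R M = length R W + length R (M ⧸ W) :=
          length_eq_add_of_exact W.subtype W.mkQ W.injective_subtype W.mkQ_surjective
            (LinearMap.exact_subtype_mkQ W)
      _ ≤ a * (⊤ : Submodule R M).spanFinrank + (⊤ : Submodule R M).spanFinrank := by
          grw [ih W hWtors, spanFinrank_top, hWgen, length_quotient_maximalIdeal_smul_top]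
      _ = (a + 1) * (⊤ : Submodule R M).spanFinrank := by ring

/-- Let `M` be a finitely generated module over a discrete valuation ring `R` with residue
field `k` and uniformizer `π`, and let `a` be a natural number.  Then the length of the
`π^a`-torsion submodule of `M` is at most `a` times the `k`-dimension of `M ⊗_R k`. -/
theorem length_torsionBy_le_mul_finrank
    {R : Type*} [CommRing R] [IsDomain R] [IsDiscreteValuationRing R]
    {π : R} (hπ : Irreducible π)
    (M : Type*) [AddCommGroup M] [Module R M] [Module.Finite R M] (a : ℕ) :
    moduleLength R (Submodule.torsionBy R M (π ^ a)) ≤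
      ((a * Module.finrank (IsLocalRing.ResidueField R)
        ((IsLocalRing.ResidueField R) ⊗[R] M) : ℕ) : WithBot ℕ∞) := by
  set T := torsionBy R M (π ^ a)
  have hT : length R T ≤ a * T.spanFinrank := by
    rw [← spanFinrank_top]
    exact length_le_mul_spanFinrank_of_isTorsionBy hπ.maximalIdeal_eq a T
      (torsionBy_isTorsionBy _)
  have hTM : T.spanFinrank ≤ (⊤ : Submodule R M).spanFinrank := T.spanFinrank_le_spanFinrank_top
  rw [moduleLength, ← coe_length, finrank_residueField_tensor_eq_spanFinrank]
  exact_mod_cast hT.trans (mul_le_mul_right (Nat.cast_le.mpr hTM) _)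
end

section
/- Let V be a finitely generated abelian group and let x be an element of V ⊗_ℤ ℝ. Suppose x = Σ_{i=1}^p x_i·v_i = Σ_{j=1}^q y_j·w_j for real numbers x_i, y_j and elements v_i, w_j of V (viewed in V ⊗_ℤ ℝ via the canonical map). Then the set { Σ_{i=1}^p ⌈m·x_i⌉·v_i − Σ_{j=1}^q ⌈m·y_j⌉·w_j | m ∈ ℤ } is a finite subset of V. -/
open TensorProduct

/-- Let `V` be a finitely generated abelian group, and suppose an element of `V ⊗_ℤ ℝ` has
two presentations `∑ i, x i • (1 ⊗ v i) = ∑ j, y j • (1 ⊗ w j)` with real coefficients and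
`v i, w j ∈ V`.  Then the set `{ ∑ i, ⌈m * x i⌉ • v i - ∑ j, ⌈m * y j⌉ • w j | m ∈ ℤ }`
is a finite subset of `V`. -/
theorem finite_ceil_differences
    {V : Type*} [AddCommGroup V] [Module.Finite ℤ V]
    {p q : ℕ} (x : Fin p → ℝ) (y : Fin q → ℝ) (v : Fin p → V) (w : Fin q → V)
    (h : ∑ i, x i • ((1 : ℝ) ⊗ₜ[ℤ] v i : ℝ ⊗[ℤ] V) =
         ∑ j, y j • ((1 : ℝ) ⊗ₜ[ℤ] w j : ℝ ⊗[ℤ] V)) :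
    Set.Finite {z : V | ∃ m : ℤ,
      z = ∑ i, ⌈(m : ℝ) * x i⌉ • v i - ∑ j, ⌈(m : ℝ) * y j⌉ • w j} := by
  classical
  set T : Submodule ℤ V := Submodule.torsion ℤ V with hTdef
  -- the torsion submodule is finite
  haveI : Finite T := Module.finite_of_fg_torsion T (Submodule.torsion_isTorsion)
  have hTfin : (T : Set V).Finite := (T : Set V).toFinite
  -- the quotient by torsion is finite free
  haveI : Module.Free ℤ (V ⧸ T) := Module.free_of_finite_type_torsion_free'
  let b := Module.Free.chooseBasis ℤ (V ⧸ T)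
  set n := Module.Free.ChooseBasisIndex ℤ (V ⧸ T)
  let π : V →ₗ[ℤ] V ⧸ T := T.mkQ
  -- real-valued coordinate functions
  let g : n → V →ₗ[ℤ] ℝ := fun k =>
    (Int.castAddHom ℝ).toIntLinearMap ∘ₗ (b.coord k) ∘ₗ π
  have hg : ∀ k z, g k z = ((b.repr (π z)) k : ℝ) := fun k z => rfl
  -- transfer the hypothesis to coordinates
  have hk : ∀ k : n, ∑ i, x i * g k (v i) = ∑ j, y j * g k (w j) := by
    intro k
    have := congrArg ((g k).liftBaseChange ℝ) h
    simpa [map_sum, LinearMap.map_smul, LinearMap.liftBaseChange_tmul,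
      smul_eq_mul] using this
  -- the bound for coordinates
  set C : n → ℝ := fun k => ∑ i, |g k (v i)| + ∑ j, |g k (w j)| with hCdef
  -- main estimate
  have key : ∀ z ∈ {z : V | ∃ m : ℤ,
      z = ∑ i, ⌈(m : ℝ) * x i⌉ • v i - ∑ j, ⌈(m : ℝ) * y j⌉ • w j},
      ∀ k : n, |g k z| ≤ C k := by
    rintro z ⟨m, rfl⟩ k
    have expand : g k (∑ i, ⌈(m : ℝ) * x i⌉ • v i - ∑ j, ⌈(m : ℝ) * y j⌉ • w j)
        = ∑ i, (⌈(m : ℝ) * x i⌉ : ℝ) * g k (v i)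
          - ∑ j, (⌈(m : ℝ) * y j⌉ : ℝ) * g k (w j) := by
      simp [map_sub, map_sum, map_zsmul, zsmul_eq_mul]
    have e1 : ∑ i, ((⌈(m : ℝ) * x i⌉ : ℝ) - (m : ℝ) * x i) * g k (v i)
        = (∑ i, (⌈(m : ℝ) * x i⌉ : ℝ) * g k (v i)) - (m : ℝ) * ∑ i, x i * g k (v i) := by
      rw [Finset.mul_sum, ← Finset.sum_sub_distrib]
      exact Finset.sum_congr rfl fun i _ => by ring
    have e2 : ∑ j, ((⌈(m : ℝ) * y j⌉ : ℝ) - (m : ℝ) * y j) * g k (w j)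
        = (∑ j, (⌈(m : ℝ) * y j⌉ : ℝ) * g k (w j)) - (m : ℝ) * ∑ j, y j * g k (w j) := by
      rw [Finset.mul_sum, ← Finset.sum_sub_distrib]
      exact Finset.sum_congr rfl fun j _ => by ring
    have frac : g k (∑ i, ⌈(m : ℝ) * x i⌉ • v i - ∑ j, ⌈(m : ℝ) * y j⌉ • w j)
        = ∑ i, ((⌈(m : ℝ) * x i⌉ : ℝ) - (m : ℝ) * x i) * g k (v i)
          - ∑ j, ((⌈(m : ℝ) * y j⌉ : ℝ) - (m : ℝ) * y j) * g k (w j) := by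
      rw [expand, e1, e2, hk k]; ring
    rw [frac]
    have habs : ∀ t : ℝ, |(⌈t⌉ : ℝ) - t| ≤ 1 := by
      intro t
      rw [abs_le]
      constructor
      · linarith [Int.le_ceil t]
      · linarith [Int.ceil_lt_add_one t]
    calc |∑ i, ((⌈(m : ℝ) * x i⌉ : ℝ) - (m : ℝ) * x i) * g k (v i)
          - ∑ j, ((⌈(m : ℝ) * y j⌉ : ℝ) - (m : ℝ) * y j) * g k (w j)|
        ≤ |∑ i, ((⌈(m : ℝ) * x i⌉ : ℝ) - (m : ℝ) * x i) * g k (v i)|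
          + |∑ j, ((⌈(m : ℝ) * y j⌉ : ℝ) - (m : ℝ) * y j) * g k (w j)| := abs_sub _ _
      _ ≤ (∑ i, |((⌈(m : ℝ) * x i⌉ : ℝ) - (m : ℝ) * x i) * g k (v i)|)
          + ∑ j, |((⌈(m : ℝ) * y j⌉ : ℝ) - (m : ℝ) * y j) * g k (w j)| := by
          exact add_le_add (Finset.abs_sum_le_sum_abs _ _) (Finset.abs_sum_le_sum_abs _ _)
      _ ≤ ∑ i, |g k (v i)| + ∑ j, |g k (w j)| := by
          refine add_le_add (Finset.sum_le_sum fun i _ => ?_)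
            (Finset.sum_le_sum fun j _ => ?_)
          · rw [abs_mul]
            exact mul_le_of_le_one_left (abs_nonneg _) (habs _)
          · rw [abs_mul]
            exact mul_le_of_le_one_left (abs_nonneg _) (habs _)
      _ = C k := rfl
  -- integer coordinates of elements of the set are bounded
  set Φ : V → n → ℤ := fun z k => (b.repr (π z)) k with hΦdef
  set K : Set (n → ℤ) := Set.pi Set.univ (fun k => Set.Icc (-⌈C k⌉) ⌈C k⌉) with hKdef
  have hK : K.Finite := Set.Finite.pi fun k => Set.finite_Icc _ _
  have hΦK : ∀ z ∈ {z : V | ∃ m : ℤ,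
      z = ∑ i, ⌈(m : ℝ) * x i⌉ • v i - ∑ j, ⌈(m : ℝ) * y j⌉ • w j}, Φ z ∈ K := by
    intro z hz k _
    have := key z hz k
    rw [hg] at this
    have h1 : |((Φ z k : ℤ) : ℝ)| ≤ C k := this
    rw [← Int.cast_abs] at h1
    have h2 : |Φ z k| ≤ ⌈C k⌉ := by
      have := h1.trans (Int.le_ceil (C k))
      exact_mod_cast this
    rw [abs_le] at h2
    exact ⟨h2.1, h2.2⟩
  -- fibers of Φ are finite
  have fib : ∀ c : n → ℤ, {z : V | Φ z = c}.Finite := by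
    intro c
    rcases Set.eq_empty_or_nonempty {z : V | Φ z = c} with he | ⟨z₀, hz₀⟩
    · rw [he]; exact Set.finite_empty
    · refine (hTfin.image (fun t => z₀ + t)).subset ?_
      intro z hz
      have hrepr : b.repr (π z) = b.repr (π z₀) := by
        ext k
        have := congrFun (hz.trans hz₀.symm) k
        exact this
      have hπ : π z = π z₀ := b.repr.injective hrepr
      have hmem : z - z₀ ∈ T := (Submodule.Quotient.eq T).mp hπ
      exact ⟨z - z₀, hmem, add_sub_cancel z₀ z⟩
  -- assemble
  refine (hK.biUnion fun c _ => fib c).subset ?_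
  intro z hz
  exact Set.mem_biUnion (hΦK z hz) rfl
end
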